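/- Let a², b², c² > 0 and define, for Q in the space S₀ of real symmetric traceless 3×3 matrices, f_bulk(Q) = −(a²/2) tr Q² − (b²/3) tr Q³ + (c²/4)(tr Q²)². Let s₊ = (b² + √(b⁴ + 24a²c²))/(4c²) and f_* = −(a²/3)s₊² − (2b²/27)s₊³ + (c²/9)s₊⁴. Then f_bulk(Q) ≥ f_* for every Q ∈ S₀, and f_bulk(Q) = f_* if and only if Q = s₊(n⊗n − (1/3)I) for some unit vector n ∈ ℝ³. In other words, the set of global minimisers of f_bulk is exactly the limit manifold S_* = { s₊(n⊗n − (1/3)I) : n ∈ S² }. -/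

import Mathlib

/-!
Write `tr Q² = (2/3) s²` with `s ≥ 0`. Then `f_bulk(Q) = g(s) + (b²/3) ((2/9) s³ - tr Q³)`,
where `g(s)` is the value of `f_bulk` at any uniaxial state `s (n⊗n - I/3)`. For the
eigenvalues `λᵢ` of a traceless `Q`, `(∑ λᵢ²)³ - 6 (∑ λᵢ³)² = 2 ∏_{i<j} (λᵢ - λⱼ)² ≥ 0`, so
`tr Q³ ≤ (2/9) s³`, with equality exactly when two eigenvalues coincide, i.e. when
`Q = s (n⊗n - I/3)`. Finally, because `s₊` is a root of `2c²s² - b²s - 3a²`, `g(s) - g(s₊)` is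
`(s - s₊)²` times a polynomial that is positive for `s ≥ 0`.
-/

open Matrix

/-- The Landau-de Gennes bulk potential
`f_bulk(Q) = -(a²/2) tr Q² - (b²/3) tr Q³ + (c²/4)(tr Q²)²`,
where `a2`, `b2`, `c2` stand for `a²`, `b²`, `c²`. -/
noncomputable def fbulk (a2 b2 c2 : ℝ) (Q : Matrix (Fin 3) (Fin 3) ℝ) : ℝ :=
  -(a2 / 2) * (Q * Q).trace - (b2 / 3) * (Q * Q * Q).trace + (c2 / 4) * ((Q * Q).trace) ^ 2

theorem Matrix.IsSymm.trace_mul_self_nonneg {n : Type*} [Fintype n] {Q : Matrix n n ℝ}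
    (hQ : Q.IsSymm) : 0 ≤ (Q * Q).trace := by
  simpa [hQ.eq] using (posSemidef_conjTranspose_mul_self Q).trace_nonneg

namespace Matrix.IsHermitian

variable {𝕜 n : Type*} [RCLike 𝕜] [Fintype n] [DecidableEq n] {A : Matrix n n 𝕜}

theorem trace_pow_eq_sum_eigenvalues_pow (hA : A.IsHermitian) (k : ℕ) :
    (A ^ k).trace = ∑ i, (hA.eigenvalues i : 𝕜) ^ k := by
  conv_lhs => rw [hA.spectral_theorem, ← map_pow, Unitary.conjStarAlgAut_apply, trace_mul_cycle,
    Unitary.coe_star_mul_self, one_mul, diagonal_pow, trace_diagonal]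
  simp

theorem star_dotProduct_eigenvectorBasis_self (hA : A.IsHermitian) (k : n) :
    star ⇑(hA.eigenvectorBasis k) ⬝ᵥ ⇑(hA.eigenvectorBasis k) = 1 := by
  rw [dotProduct_comm, ← EuclideanSpace.inner_eq_star_dotProduct]
  simp [hA.eigenvectorBasis.orthonormal.1 k]

theorem eq_smul_vecMulVec_add_smul_one (hA : A.IsHermitian) {k : n} {α β : ℝ}
    (h : ∀ i, hA.eigenvalues i = if i = k then α else β) :
    A = (α - β) • vecMulVec ⇑(hA.eigenvectorBasis k) (star ⇑(hA.eigenvectorBasis k))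
      + β • (1 : Matrix n n 𝕜) := by
  have hdiag : diagonal (RCLike.ofReal ∘ hA.eigenvalues)
      = (α - β) • single k k (1 : 𝕜) + β • (1 : Matrix n n 𝕜) := by
    ext i j
    rcases eq_or_ne i j with rfl | hij
    · rcases eq_or_ne i k with rfl | hik
      · simp [h, RCLike.real_smul_eq_coe_mul]
      · simp [h, hik, Ne.symm hik, RCLike.real_smul_eq_coe_mul]
    · simp [hij, single_apply]
      rintro rfl rfl
      exact absurd rfl hij
  have hrow : Pi.single k 1 ᵥ* star (hA.eigenvectorUnitary : Matrix n n 𝕜)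
      = star ⇑(hA.eigenvectorBasis k) := by
    rw [← eigenvectorUnitary_mulVec, star_mulVec, ← Pi.single_star, star_one,
      star_eq_conjTranspose]
  conv_lhs => rw [hA.spectral_theorem, Unitary.conjStarAlgAut_apply, hdiag,
    single_eq_single_vecMulVec_single]
  simp only [mul_add, add_mul, mul_smul_comm, smul_mul_assoc, mul_one, mul_vecMulVec, vecMulVec_mul,
    eigenvectorUnitary_mulVec, hrow, Unitary.mul_star_self_of_mem hA.eigenvectorUnitary.2]

end Matrix.IsHermitian

/-- Twice the discriminant of the depressed cubic with roots `x`, `y`, `z`. -/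
theorem sum_sq_pow_three_sub_six_mul_sum_cube_sq {x y z : ℝ} (h : x + y + z = 0) :
    (x ^ 2 + y ^ 2 + z ^ 2) ^ 3 - 6 * (x ^ 3 + y ^ 3 + z ^ 3) ^ 2
      = 2 * ((x - y) * (y - z) * (x - z)) ^ 2 := by
  rw [show z = -x - y by linarith]
  ring

theorem eq_neg_div_three_of_eq_of_sum_cube_eq {x y z s : ℝ} (h1 : x + y + z = 0) (hxy : x = y)
    (h3 : x ^ 3 + y ^ 3 + z ^ 3 = 2 / 9 * s ^ 3) : x = -s / 3 ∧ y = -s / 3 ∧ z = 2 * s / 3 := by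
  subst hxy
  have hx : x ^ 3 = (-s / 3) ^ 3 := by
    rw [show z = -2 * x by linarith] at h3
    linear_combination -h3 / 6
  have hx' : x = -s / 3 := (Odd.pow_inj (by decide)).1 hx
  exact ⟨hx', hx', by linarith⟩

section EigenvalueTriples

variable {l : Fin 3 → ℝ} {s : ℝ}

theorem sum_cube_le_of_sum_eq_zero (hs : 0 ≤ s) (h1 : ∑ i, l i = 0)
    (h2 : ∑ i, l i ^ 2 = 2 / 3 * s ^ 2) : ∑ i, l i ^ 3 ≤ 2 / 9 * s ^ 3 := by
  simp only [Fin.sum_univ_three] at h1 h2 ⊢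
  have hdisc := sum_sq_pow_three_sub_six_mul_sum_cube_sq h1
  rw [h2] at hdisc
  have hsq : (l 0 ^ 3 + l 1 ^ 3 + l 2 ^ 3) ^ 2 ≤ (2 / 9 * s ^ 3) ^ 2 := by
    nlinarith [sq_nonneg ((l 0 - l 1) * (l 1 - l 2) * (l 0 - l 2))]
  exact (abs_le_of_sq_le_sq' hsq (by positivity)).2

theorem exists_eq_ite_of_sum_cube_eq (h1 : ∑ i, l i = 0) (h2 : ∑ i, l i ^ 2 = 2 / 3 * s ^ 2)
    (h3 : ∑ i, l i ^ 3 = 2 / 9 * s ^ 3) :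
    ∃ k, ∀ i, l i = if i = k then 2 * s / 3 else -s / 3 := by
  simp only [Fin.sum_univ_three] at h1 h2 h3
  have hdisc := sum_sq_pow_three_sub_six_mul_sum_cube_sq h1
  rw [h2, h3] at hdisc
  have hprod : (l 0 - l 1) * (l 1 - l 2) * (l 0 - l 2) = 0 :=
    pow_eq_zero_iff two_ne_zero |>.1 (by linear_combination -hdisc / 2)
  rcases mul_eq_zero.1 hprod with h | h02
  · rcases mul_eq_zero.1 h with h01 | h12
    · obtain ⟨e0, e1, e2⟩ := eq_neg_div_three_of_eq_of_sum_cube_eq h1 (sub_eq_zero.1 h01) h3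
      exact ⟨2, fun i => by fin_cases i <;> simp [e0, e1, e2]⟩
    · obtain ⟨e1, e2, e0⟩ := eq_neg_div_three_of_eq_of_sum_cube_eq (by linarith)
        (sub_eq_zero.1 h12) (by linarith : l 1 ^ 3 + l 2 ^ 3 + l 0 ^ 3 = 2 / 9 * s ^ 3)
      exact ⟨0, fun i => by fin_cases i <;> simp [e0, e1, e2]⟩
  · obtain ⟨e0, e2, e1⟩ := eq_neg_div_three_of_eq_of_sum_cube_eq (by linarith)
      (sub_eq_zero.1 h02) (by linarith : l 0 ^ 3 + l 2 ^ 3 + l 1 ^ 3 = 2 / 9 * s ^ 3)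
    exact ⟨1, fun i => by fin_cases i <;> simp [e0, e1, e2]⟩

end EigenvalueTriples

noncomputable def sPlus (a2 b2 c2 : ℝ) : ℝ := (b2 + √(b2 ^ 2 + 24 * a2 * c2)) / (4 * c2)

theorem sPlus_pos {a2 c2 : ℝ} (ha : 0 < a2) (hc : 0 < c2) (b2 : ℝ) : 0 < sPlus a2 b2 c2 := by
  have : |b2| < √(b2 ^ 2 + 24 * a2 * c2) := by
    rw [← Real.sqrt_sq_eq_abs]
    exact Real.sqrt_lt_sqrt (sq_nonneg b2) (by linarith [mul_pos ha hc])
  exact div_pos (by linarith [neg_abs_le b2]) (by positivity)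

theorem sPlus_quadratic_eq {a2 c2 : ℝ} (ha : 0 ≤ a2) (hc : 0 < c2) (b2 : ℝ) :
    2 * c2 * sPlus a2 b2 c2 ^ 2 = b2 * sPlus a2 b2 c2 + 3 * a2 := by
  have hsq := Real.sq_sqrt (by positivity : 0 ≤ b2 ^ 2 + 24 * a2 * c2)
  unfold sPlus
  generalize √(b2 ^ 2 + 24 * a2 * c2) = r at hsq
  field_simp
  linear_combination 2 * hsq

noncomputable def uniaxialEnergy (a2 b2 c2 s : ℝ) : ℝ :=
  -(a2 / 3) * s ^ 2 - (2 * b2 / 27) * s ^ 3 + (c2 / 9) * s ^ 4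

section UniaxialEnergy

variable {a2 b2 c2 sp s : ℝ}

theorem uniaxialEnergy_lt_of_ne (ha : 0 < a2) (hb : 0 ≤ b2) (hc : 0 < c2) (hsp : 0 < sp)
    (hroot : 2 * c2 * sp ^ 2 = b2 * sp + 3 * a2) (hs : 0 ≤ s) (hne : s ≠ sp) :
    uniaxialEnergy a2 b2 c2 sp < uniaxialEnergy a2 b2 c2 s := by
  have hb' : b2 < 2 * c2 * sp := by nlinarith
  have hfactor :
      0 < c2 / 9 * s ^ 2 + (2 * c2 * sp / 9 - 2 * b2 / 27) * s + (a2 / 6 + b2 * sp / 54) := by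
    have : 0 ≤ (2 * c2 * sp / 9 - 2 * b2 / 27) * s := mul_nonneg (by linarith) hs
    positivity
  have hdiff : uniaxialEnergy a2 b2 c2 s - uniaxialEnergy a2 b2 c2 sp = (s - sp) ^ 2
      * (c2 / 9 * s ^ 2 + (2 * c2 * sp / 9 - 2 * b2 / 27) * s + (a2 / 6 + b2 * sp / 54)) := by
    unfold uniaxialEnergy
    linear_combination ((s ^ 2 - sp ^ 2) / 9 + (s - sp) ^ 2 / 18) * hroot
  have := mul_pos (pow_two_pos_of_ne_zero (sub_ne_zero.2 hne)) hfactor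
  linarith

theorem uniaxialEnergy_le (ha : 0 < a2) (hb : 0 ≤ b2) (hc : 0 < c2) (hsp : 0 < sp)
    (hroot : 2 * c2 * sp ^ 2 = b2 * sp + 3 * a2) (hs : 0 ≤ s) :
    uniaxialEnergy a2 b2 c2 sp ≤ uniaxialEnergy a2 b2 c2 s := by
  rcases eq_or_ne s sp with rfl | hne
  · exact le_rfl
  · exact (uniaxialEnergy_lt_of_ne ha hb hc hsp hroot hs hne).le

end UniaxialEnergy

section Traceless

variable {Q : Matrix (Fin 3) (Fin 3) ℝ} {s : ℝ}

theorem trace_cube_le_of_trace_eq_zero (hQ : Q.IsHermitian) (htr : Q.trace = 0) (hs : 0 ≤ s)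
    (h2 : (Q * Q).trace = 2 / 3 * s ^ 2) : (Q * Q * Q).trace ≤ 2 / 9 * s ^ 3 := by
  have hk : ∀ k, (Q ^ k).trace = ∑ i, hQ.eigenvalues i ^ k := by
    simpa using hQ.trace_pow_eq_sum_eigenvalues_pow
  rw [← pow_one Q, hk] at htr
  rw [← sq, hk] at h2
  rw [← pow_three', hk]
  exact sum_cube_le_of_sum_eq_zero hs (by simpa using htr) h2

theorem exists_eq_uniaxial_of_trace_cube_eq (hQ : Q.IsHermitian) (htr : Q.trace = 0)
    (h2 : (Q * Q).trace = 2 / 3 * s ^ 2) (h3 : (Q * Q * Q).trace = 2 / 9 * s ^ 3) :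
    ∃ n : Fin 3 → ℝ, n ⬝ᵥ n = 1 ∧ Q = s • (vecMulVec n n - (3 : ℝ)⁻¹ • 1) := by
  have hk : ∀ k, (Q ^ k).trace = ∑ i, hQ.eigenvalues i ^ k := by
    simpa using hQ.trace_pow_eq_sum_eigenvalues_pow
  rw [← pow_one Q, hk] at htr
  rw [← sq, hk] at h2
  rw [← pow_three', hk] at h3
  obtain ⟨k, hl⟩ := exists_eq_ite_of_sum_cube_eq (by simpa using htr) h2 h3
  refine ⟨hQ.eigenvectorBasis k, by simpa using hQ.star_dotProduct_eigenvectorBasis_self k, ?_⟩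
  conv_lhs => rw [hQ.eq_smul_vecMulVec_add_smul_one hl, star_trivial]
  module

theorem fbulk_eq_uniaxialEnergy_add (h2 : (Q * Q).trace = 2 / 3 * s ^ 2) (a2 b2 c2 : ℝ) :
    fbulk a2 b2 c2 Q
      = uniaxialEnergy a2 b2 c2 s + b2 / 3 * (2 / 9 * s ^ 3 - (Q * Q * Q).trace) := by
  rw [fbulk, uniaxialEnergy, h2]
  ring

end Traceless

theorem fbulk_uniaxial {n : Fin 3 → ℝ} (hn : n ⬝ᵥ n = 1) (a2 b2 c2 s : ℝ) :
    fbulk a2 b2 c2 (s • (vecMulVec n n - (3 : ℝ)⁻¹ • 1)) = uniaxialEnergy a2 b2 c2 s := by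
  set P := vecMulVec n n
  have hP : P * P = P := by rw [vecMulVec_mul_vecMulVec, hn, one_smul]
  have htrP : P.trace = 1 := by rw [trace_vecMulVec, hn]
  set Q := s • (P - (3 : ℝ)⁻¹ • 1)
  have hsq : Q * Q = (s ^ 2 / 3) • P + (s ^ 2 / 9) • (1 : Matrix (Fin 3) (Fin 3) ℝ) := by
    simp only [Q, sub_mul, mul_sub, smul_mul_assoc, mul_smul_comm, smul_smul, one_mul, mul_one, hP]
    module
  have hcube :
      Q * Q * Q = (s ^ 3 / 3) • P - (s ^ 3 / 27) • (1 : Matrix (Fin 3) (Fin 3) ℝ) := by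
    simp only [hsq, Q, add_mul, mul_sub, smul_mul_assoc, mul_smul_comm, one_mul, mul_one, hP]
    module
  have h2 : (Q * Q).trace = 2 / 3 * s ^ 2 := by
    rw [hsq, trace_add, trace_smul, trace_smul, htrP, trace_one]
    norm_num
    ring
  have h3 : (Q * Q * Q).trace = 2 / 9 * s ^ 3 := by
    rw [hcube, trace_sub, trace_smul, trace_smul, htrP, trace_one]
    norm_num
    ring
  rw [fbulk_eq_uniaxialEnergy_add h2, h3, sub_self, mul_zero, add_zero]

/-- Over symmetric traceless 3×3 matrices, the bulk potential `f_bulk` is bounded below by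
`f_* = -(a²/3)s₊² - (2b²/27)s₊³ + (c²/9)s₊⁴` with `s₊ = (b² + √(b⁴ + 24a²c²))/(4c²)`, and
the minimum is attained exactly on the limit manifold `{ s₊(n⊗n - (1/3)I) : n ∈ S² }`. -/
theorem fbulk_min_on_limit_manifold
    (a2 b2 c2 : ℝ) (ha : 0 < a2) (hb : 0 < b2) (hc : 0 < c2)
    (splus fstar : ℝ)
    (hsplus : splus = (b2 + Real.sqrt (b2 ^ 2 + 24 * a2 * c2)) / (4 * c2))
    (hfstar : fstar = -(a2 / 3) * splus ^ 2 - (2 * b2 / 27) * splus ^ 3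
      + (c2 / 9) * splus ^ 4) :
    ∀ Q : Matrix (Fin 3) (Fin 3) ℝ, Q.IsSymm → Q.trace = 0 →
      fstar ≤ fbulk a2 b2 c2 Q
      ∧ (fbulk a2 b2 c2 Q = fstar ↔
          ∃ n : Fin 3 → ℝ, n ⬝ᵥ n = 1
            ∧ Q = splus • (vecMulVec n n - (3 : ℝ)⁻¹ • (1 : Matrix (Fin 3) (Fin 3) ℝ))) := by
  intro Q hQ htr
  have hH : Q.IsHermitian := isHermitian_iff_isSymm.2 hQ
  have hsp : 0 < splus := hsplus ▸ sPlus_pos ha hc b2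
  have hroot : 2 * c2 * splus ^ 2 = b2 * splus + 3 * a2 := hsplus ▸ sPlus_quadratic_eq ha.le hc b2
  set s := √(3 / 2 * (Q * Q).trace)
  have hs : 0 ≤ s := Real.sqrt_nonneg _
  have h2 : (Q * Q).trace = 2 / 3 * s ^ 2 := by
    rw [Real.sq_sqrt (by linarith [hQ.trace_mul_self_nonneg])]
    ring
  have hanis : 0 ≤ b2 / 3 * (2 / 9 * s ^ 3 - (Q * Q * Q).trace) :=
    mul_nonneg (by positivity) (sub_nonneg.2 (trace_cube_le_of_trace_eq_zero hH htr hs h2))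
  have hE := uniaxialEnergy_le ha hb.le hc hsp hroot hs
  rw [show fstar = uniaxialEnergy a2 b2 c2 splus from hfstar, fbulk_eq_uniaxialEnergy_add h2]
  refine ⟨by linarith, fun heq => ?_, fun ⟨n, hn, hQn⟩ => ?_⟩
  · have hs' : s = splus := by
      by_contra hne
      linarith [uniaxialEnergy_lt_of_ne ha hb.le hc hsp hroot hs hne]
    have hanis0 : b2 / 3 * (2 / 9 * s ^ 3 - (Q * Q * Q).trace) = 0 := by linarith
    have h3 : (Q * Q * Q).trace = 2 / 9 * s ^ 3 := by
      linarith [(mul_eq_zero.1 hanis0).resolve_left (by positivity)]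
    obtain ⟨n, hn, hQn⟩ := exists_eq_uniaxial_of_trace_cube_eq hH htr h2 h3
    exact ⟨n, hn, hs' ▸ hQn⟩
  · rw [← fbulk_eq_uniaxialEnergy_add h2, hQn, fbulk_uniaxial hn]
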